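/- First derivatives of the on-shell Hamiltonian: Assume L₀, each C a, and v are differentiable and the momentum identity and constraint identity hold at every point of ℝⁿ × ℝⁿ. Then the on-shell Hamiltonian H is differentiable and, for every (q,p) and every index I, the partial derivative of H with respect to p I equals v(q,p) I, and the partial derivative of H with respect to q I equals −∂₂ᴵL₀(v(q,p), q) − Σ_a F a (q,p) · ∂₂ᴵ(C a)(v(q,p), q). -/

import Mathlib

/-!
Differentiate `H` in a direction `w = (δq, δp)` and write `δv = Dv · w`. The terms containing `δv`
are `Σ_J δv_J p_J - ∂₁L₀ · δv`, which the momentum identity turns into `Σ_a F_a ∂₁C_a · δv`.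
Differentiating the constraint identity along `w` gives `∂₁C_a · δv = -∂₂C_a · δq`, so every
derivative of `v` drops out and `DH · w = Σ_J v_J δp_J - ∂₂L₀ · δq - Σ_a F_a ∂₂C_a · δq`.
-/

open scoped BigOperators

/-- Partial derivative of `f` with respect to the `I`-th coordinate of its first argument. -/
noncomputable def pd1 {n : ℕ} (f : (Fin n → ℝ) × (Fin n → ℝ) → ℝ) (I : Fin n)
    (x : (Fin n → ℝ) × (Fin n → ℝ)) : ℝ :=
  deriv (fun t => f (Function.update x.1 I t, x.2)) (x.1 I)

/-- Partial derivative of `f` with respect to the `I`-th coordinate of its second argument. -/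
noncomputable def pd2 {n : ℕ} (f : (Fin n → ℝ) × (Fin n → ℝ) → ℝ) (I : Fin n)
    (x : (Fin n → ℝ) × (Fin n → ℝ)) : ℝ :=
  deriv (fun t => f (x.1, Function.update x.2 I t)) (x.2 I)

open Finset

section PartialDerivatives

variable {n : ℕ} {f : (Fin n → ℝ) × (Fin n → ℝ) → ℝ} {x : (Fin n → ℝ) × (Fin n → ℝ)}

theorem pd1_eq_fderiv (hf : DifferentiableAt ℝ f x) (I : Fin n) :
    pd1 f I x = fderiv ℝ f x (Pi.single I 1, 0) := by
  have hline : HasDerivAt (fun t => (Function.update x.1 I t, x.2)) (Pi.single I 1, 0) (x.1 I) :=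
    (hasDerivAt_update x.1 I _).prodMk (hasDerivAt_const _ _)
  have hf' : HasFDerivAt f (fderiv ℝ f x) (Function.update x.1 I (x.1 I), x.2) := by
    simpa using hf.hasFDerivAt
  exact (hf'.comp_hasDerivAt _ hline).deriv

theorem pd2_eq_fderiv (hf : DifferentiableAt ℝ f x) (I : Fin n) :
    pd2 f I x = fderiv ℝ f x (0, Pi.single I 1) := by
  have hline : HasDerivAt (fun t => (x.1, Function.update x.2 I t)) (0, Pi.single I 1) (x.2 I) :=
    (hasDerivAt_const _ _).prodMk (hasDerivAt_update x.2 I _)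
  have hf' : HasFDerivAt f (fderiv ℝ f x) (x.1, Function.update x.2 I (x.2 I)) := by
    simpa using hf.hasFDerivAt
  exact (hf'.comp_hasDerivAt _ hline).deriv

end PartialDerivatives

theorem map_prodMk_eq_add {M N P F : Type*} [AddZeroClass M] [AddZeroClass N] [AddZeroClass P]
    [FunLike F (M × N) P] [AddMonoidHomClass F (M × N) P] (f : F) (x : M) (y : N) :
    f (x, y) = f (x, 0) + f (0, y) := by
  rw [← map_add, Prod.mk_add_mk, add_zero, zero_add]

theorem LinearMap.sum_mul_apply_single {R ι : Type*} [CommSemiring R] [Fintype ι] [DecidableEq ι]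
    (f : (ι → R) →ₗ[R] R) (u : ι → R) : ∑ i, u i * f (Pi.single i 1) = f u := by
  conv_rhs => rw [← Finset.univ_sum_single u, map_sum]
  refine Finset.sum_congr rfl fun i _ => ?_
  rw [← smul_eq_mul, ← map_smul, ← Pi.single_smul', smul_eq_mul, mul_one]

theorem fderiv_apply_fderiv_eq_zero_of_comp_eq_zero {𝕜 E F G : Type*} [NontriviallyNormedField 𝕜]
    [NormedAddCommGroup E] [NormedSpace 𝕜 E] [NormedAddCommGroup F] [NormedSpace 𝕜 F]
    [NormedAddCommGroup G] [NormedSpace 𝕜 G] {f : F → G} {φ : E → F} {x : E}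
    (hf : DifferentiableAt 𝕜 f (φ x)) (hφ : DifferentiableAt 𝕜 φ x) (h : ∀ y, f (φ y) = 0)
    (w : E) : fderiv 𝕜 f (φ x) (fderiv 𝕜 φ x w) = 0 := by
  have hzero : f ∘ φ = fun _ => 0 := funext h
  rw [← ContinuousLinearMap.comp_apply, ← fderiv_comp x hf hφ, hzero, fderiv_fun_const]
  rfl

section OnShell

variable {n m : ℕ} {L₀ : (Fin n → ℝ) × (Fin n → ℝ) → ℝ}
  {C : Fin m → ((Fin n → ℝ) × (Fin n → ℝ) → ℝ)} {v : (Fin n → ℝ) × (Fin n → ℝ) → (Fin n → ℝ)}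
  {z : (Fin n → ℝ) × (Fin n → ℝ)}

variable (L₀ v) in
noncomputable def onShellHamiltonian (z : (Fin n → ℝ) × (Fin n → ℝ)) : ℝ :=
  (∑ I, v z I * z.2 I) - L₀ (v z, z.1)

theorem hasFDerivAt_velocity_position (hv : DifferentiableAt ℝ v z) :
    HasFDerivAt (fun z => (v z, z.1))
      ((fderiv ℝ v z).prod (ContinuousLinearMap.fst ℝ (Fin n → ℝ) (Fin n → ℝ))) z :=
  hv.hasFDerivAt.prodMk hasFDerivAt_fst

theorem hasFDerivAt_onShellHamiltonian (hL : DifferentiableAt ℝ L₀ (v z, z.1))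
    (hv : DifferentiableAt ℝ v z) :
    HasFDerivAt (onShellHamiltonian L₀ v)
      ((∑ J, (v z J • (ContinuousLinearMap.proj J).comp (ContinuousLinearMap.snd ℝ _ _) +
        z.2 J • (ContinuousLinearMap.proj J).comp (fderiv ℝ v z))) -
        (fderiv ℝ L₀ (v z, z.1)).comp
          ((fderiv ℝ v z).prod (ContinuousLinearMap.fst ℝ (Fin n → ℝ) (Fin n → ℝ)))) z := by
  have hvJ : ∀ J, HasFDerivAt (fun z => v z J)
      ((ContinuousLinearMap.proj J).comp (fderiv ℝ v z)) z :=
    hasFDerivAt_pi'.1 hv.hasFDerivAt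
  have hpJ : ∀ J, HasFDerivAt (fun z : (Fin n → ℝ) × (Fin n → ℝ) => z.2 J)
      ((ContinuousLinearMap.proj J).comp (ContinuousLinearMap.snd ℝ (Fin n → ℝ) (Fin n → ℝ))) z :=
    hasFDerivAt_pi'.1 hasFDerivAt_snd
  exact (HasFDerivAt.fun_sum fun J _ => (hvJ J).mul (hpJ J)).sub
    (hL.hasFDerivAt.comp z (hasFDerivAt_velocity_position hv))

theorem fderiv_onShellHamiltonian_apply (hL : DifferentiableAt ℝ L₀ (v z, z.1))
    (hv : DifferentiableAt ℝ v z) (w : (Fin n → ℝ) × (Fin n → ℝ)) :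
    fderiv ℝ (onShellHamiltonian L₀ v) z w =
      ∑ J, (v z J * w.2 J + fderiv ℝ v z w J * z.2 J) -
        fderiv ℝ L₀ (v z, z.1) (fderiv ℝ v z w, w.1) := by
  rw [(hasFDerivAt_onShellHamiltonian hL hv).fderiv]
  simp [mul_comm]

theorem sum_mul_eq_of_momentum {F : Fin m → ℝ} {p : Fin n → ℝ} {x : (Fin n → ℝ) × (Fin n → ℝ)}
    (hL : DifferentiableAt ℝ L₀ x) (hC : ∀ a, DifferentiableAt ℝ (C a) x)
    (hmom : ∀ I, p I = pd1 L₀ I x + ∑ a, F a * pd1 (C a) I x) (u : Fin n → ℝ) :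
    ∑ J, u J * p J = fderiv ℝ L₀ x (u, 0) + ∑ a, F a * fderiv ℝ (C a) x (u, 0) := by
  set ℓ := (fderiv ℝ L₀ x + ∑ a, F a • fderiv ℝ (C a) x).comp
    (ContinuousLinearMap.inl ℝ (Fin n → ℝ) (Fin n → ℝ))
  have hp : ∀ J, p J = ℓ (Pi.single J 1) := fun J => by
    simp [ℓ, hmom J, pd1_eq_fderiv hL, pd1_eq_fderiv (hC _)]
  calc ∑ J, u J * p J = ℓ u := by
        simp_rw [hp]
        exact ℓ.toLinearMap.sum_mul_apply_single u
    _ = _ := by simp [ℓ]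

theorem fderiv_constraint_fst_eq_neg_snd {c : (Fin n → ℝ) × (Fin n → ℝ) → ℝ}
    (hc : DifferentiableAt ℝ c (v z, z.1)) (hv : DifferentiableAt ℝ v z)
    (hcon : ∀ y, c (v y, y.1) = 0) (w : (Fin n → ℝ) × (Fin n → ℝ)) :
    fderiv ℝ c (v z, z.1) (fderiv ℝ v z w, 0) = -fderiv ℝ c (v z, z.1) (0, w.1) := by
  have h := fderiv_apply_fderiv_eq_zero_of_comp_eq_zero (φ := fun y => (v y, y.1)) hc
    (hasFDerivAt_velocity_position hv).differentiableAt hcon w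
  rw [(hasFDerivAt_velocity_position hv).fderiv, ContinuousLinearMap.prod_apply,
    ContinuousLinearMap.coe_fst', map_prodMk_eq_add] at h
  linarith

theorem fderiv_onShellHamiltonian_apply_of_solved
    {F : (Fin n → ℝ) × (Fin n → ℝ) → (Fin m → ℝ)}
    (hL : DifferentiableAt ℝ L₀ (v z, z.1)) (hC : ∀ a, DifferentiableAt ℝ (C a) (v z, z.1))
    (hv : DifferentiableAt ℝ v z)
    (hmom : ∀ I, z.2 I = pd1 L₀ I (v z, z.1) + ∑ a, F z a * pd1 (C a) I (v z, z.1))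
    (hcon : ∀ y, ∀ a, C a (v y, y.1) = 0) (w : (Fin n → ℝ) × (Fin n → ℝ)) :
    fderiv ℝ (onShellHamiltonian L₀ v) z w = ∑ J, v z J * w.2 J -
      fderiv ℝ L₀ (v z, z.1) (0, w.1) - ∑ a, F z a * fderiv ℝ (C a) (v z, z.1) (0, w.1) := by
  rw [fderiv_onShellHamiltonian_apply hL hv, sum_add_distrib,
    sum_mul_eq_of_momentum hL hC hmom, map_prodMk_eq_add _ (fderiv ℝ v z w) w.1]
  simp only [fderiv_constraint_fst_eq_neg_snd (hC _) hv (fun y => hcon y _), mul_neg,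
    sum_neg_distrib]
  ring

end OnShell

/-- First derivatives of the on-shell Hamiltonian: `∂H/∂p_I = v_I` and
`∂H/∂q_I = −∂L/∂q_I` evaluated on shell. -/
theorem onshell_hamiltonian_first_derivatives
    {n m : ℕ}
    (L₀ : (Fin n → ℝ) × (Fin n → ℝ) → ℝ)
    (C : Fin m → ((Fin n → ℝ) × (Fin n → ℝ) → ℝ))
    (v : (Fin n → ℝ) × (Fin n → ℝ) → (Fin n → ℝ))
    (F : (Fin n → ℝ) × (Fin n → ℝ) → (Fin m → ℝ))
    (hL : Differentiable ℝ L₀)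
    (hC : ∀ a, Differentiable ℝ (C a))
    (hv : Differentiable ℝ v)
    (hmom : ∀ z : (Fin n → ℝ) × (Fin n → ℝ), ∀ I : Fin n,
      z.2 I = pd1 L₀ I (v z, z.1) + ∑ a, F z a * pd1 (C a) I (v z, z.1))
    (hcon : ∀ z : (Fin n → ℝ) × (Fin n → ℝ), ∀ a, C a (v z, z.1) = 0)
    (H : (Fin n → ℝ) × (Fin n → ℝ) → ℝ)
    (hH : ∀ z : (Fin n → ℝ) × (Fin n → ℝ), H z = (∑ I, v z I * z.2 I) - L₀ (v z, z.1)) :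
    Differentiable ℝ H ∧
    ∀ z : (Fin n → ℝ) × (Fin n → ℝ), ∀ I : Fin n,
      pd2 H I z = v z I ∧
      pd1 H I z = -(pd2 L₀ I (v z, z.1)) - ∑ a, F z a * pd2 (C a) I (v z, z.1) := by
  obtain rfl : H = onShellHamiltonian L₀ v := funext hH
  have hdiff : Differentiable ℝ (onShellHamiltonian L₀ v) := fun z =>
    (hasFDerivAt_onShellHamiltonian (hL _) (hv z)).differentiableAt
  have hDH := fun z => fderiv_onShellHamiltonian_apply_of_solved (hL _) (fun a => hC a _) (hv z)
    (hmom z) hcon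
  refine ⟨hdiff, fun z I => ⟨?_, ?_⟩⟩
  · rw [pd2_eq_fderiv (hdiff z), hDH]
    simp [Pi.single_apply, Prod.mk_zero_zero]
  · rw [pd1_eq_fderiv (hdiff z), hDH, pd2_eq_fderiv (hL _)]
    simp [pd2_eq_fderiv (hC _ _)]
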